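/- Let d, n, k be natural numbers. Let Ψ : Fin k → MvPolynomial (Fin n) ℂ be a tuple of polynomials with zero constant coefficient, let Δ : Fin n → MvPolynomial (Fin n) ℂ be a tuple with zero constant coefficients and invertible matrix of linear coefficients, and let Δ' : Fin k → MvPolynomial (Fin k) ℂ be a tuple with zero constant coefficients and invertible matrix of linear coefficients. Define the left-right transformed tuple Ψ'' : Fin k → MvPolynomial (Fin n) ℂ by Ψ'' j = aeval (fun i => aeval Δ (Ψ i)) (Δ' j) (i.e. first reparametrize the source by Δ, then the target by Δ'). Then the quotient rings MvPolynomial (Fin n) ℂ / (Ideal.span (Set.range Ψ) ⊔ m_n^(d+1)) and MvPolynomial (Fin n) ℂ / (Ideal.span (Set.range Ψ'') ⊔ m_n^(d+1)) are isomorphic as ℂ-algebras. In particular, the local algebra A_Ψ is invariant under the left-right action of Diff_d^n × Diff_d^k on map-jets, so each contact singularity Θ_A = {Ψ : A_Ψ ≅ A} is a left-right invariant subset of J_d^{n,k}. -/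

import Mathlib

/-!
Write `m` for the ideal of the variables. A jet `Δ` with invertible linear part `M` agrees with
the linear substitution `x ↦ M x` up to a map raising `m`-adic order by one, and that
substitution is an automorphism preserving `m`. A Newton-type correction then shows that
`aeval Δ` is bijective modulo every `m ^ N`, so it induces an isomorphism
`P ⧸ ⟨Ψ⟩ + m ^ N ≃ P ⧸ ⟨Ψ ∘ Δ⟩ + m ^ N`. On the target side the same comparison gives
`m = ⟨Δ'⟩ + m ^ 2`, hence `m = ⟨Δ'⟩ + m ^ N`; substituting `Φ = Ψ ∘ Δ` into this shows that
`⟨Δ' ∘ Φ⟩` and `⟨Φ⟩` agree modulo `m ^ N`.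
-/

open MvPolynomial

/-- The ideal of `MvPolynomial (Fin n) ℂ` generated by the variables. -/
noncomputable def varIdeal (n : ℕ) : Ideal (MvPolynomial (Fin n) ℂ) :=
  Ideal.span (Set.range (X : Fin n → MvPolynomial (Fin n) ℂ))

/-- The linear part of a jet: the matrix whose `(i, j)` entry is the coefficient of
`X j` in the `i`-th component. -/
noncomputable def linearPart {n k : ℕ} (Ψ : Fin k → MvPolynomial (Fin n) ℂ) :
    Matrix (Fin k) (Fin n) ℂ :=
  Matrix.of fun i j => coeff (Finsupp.single j 1) (Ψ i)

namespace Ideal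

variable {A B : Type*} [CommRing A] [CommRing B]

theorem le_sup_pow_of_le_sup_sq {I K : Ideal A} (h : I ≤ K ⊔ I ^ 2) (n : ℕ) :
    I ≤ K ⊔ I ^ (n + 1) := by
  induction n with
  | zero => simp
  | succ n ih =>
    calc I ≤ K ⊔ I * I := by rwa [← sq]
      _ ≤ K ⊔ I * (K ⊔ I ^ (n + 1)) := sup_le_sup_left (mul_mono_right ih) _
      _ ≤ K ⊔ I ^ (n + 2) := by
        rw [mul_sup, ← sup_assoc, ← pow_succ']
        exact sup_le_sup_right (sup_le le_rfl mul_le_right) _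

theorem map_sup_pow_eq_of_le_sup_pow {F : Type*} [FunLike F A B] [RingHomClass F A B] {θ : F}
    {I K : Ideal A} {J : Ideal B} {N : ℕ} (hKI : K ≤ I) (hIK : I ≤ K ⊔ I ^ N)
    (hI : I.map θ ≤ J) :
    K.map θ ⊔ J ^ N = I.map θ ⊔ J ^ N := by
  refine le_antisymm (sup_le_sup_right (map_mono hKI) _) (sup_le ?_ le_sup_right)
  calc I.map θ ≤ (K ⊔ I ^ N).map θ := map_mono hIK
    _ = K.map θ ⊔ (I.map θ) ^ N := by rw [map_sup, Ideal.map_pow]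
    _ ≤ K.map θ ⊔ J ^ N := sup_le_sup_left (pow_right_mono hI N) _

theorem apply_mem_pow_of_map_le {F : Type*} [FunLike F A B] [RingHomClass F A B] {f : F}
    {I : Ideal A} {J : Ideal B} (h : I.map f ≤ J) {r : ℕ} {a : A} (ha : a ∈ I ^ r) :
    f a ∈ J ^ r :=
  pow_right_mono h r (Ideal.map_pow f I r ▸ mem_map_of_mem f ha)

section

variable {F : Type*} [FunLike F A B] [RingHomClass F A B]

theorem sub_mem_pow_succ_of_mem_pow {f g : F} {I : Ideal A} {J : Ideal B}
    (hf : I.map f ≤ J) (hg : I.map g ≤ J) (hfg : ∀ a, f a - g a ∈ J ^ 2) :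
    ∀ {r : ℕ} {a : A}, a ∈ I ^ r → f a - g a ∈ J ^ (r + 1) := by
  intro r
  induction r with
  | zero => exact fun {a} _ => pow_le_pow_right one_le_two (hfg a)
  | succ r ih =>
    intro a ha
    rw [pow_succ] at ha
    refine Submodule.mul_induction_on ha (fun a ha b hb => ?_) (fun x y hx hy => ?_)
    · rw [map_mul, map_mul,
        show f a * f b - g a * g b = (f a - g a) * f b + g a * (f b - g b) by ring]
      refine add_mem ?_ ?_
      · rw [pow_succ]
        exact mul_mem_mul (ih ha) (hf (mem_map_of_mem f hb))
      · rw [show r + 1 + 1 = r + 2 from rfl, pow_add]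
        exact mul_mem_mul (apply_mem_pow_of_map_le hg ha) (hfg b)
    · rw [map_add, map_add, add_sub_add_comm]
      exact add_mem hx hy

end

section

variable {F : Type*} [FunLike F A A] [RingHomClass F A A] {I : Ideal A} {φ ℓ ℓ' : F}

theorem exists_apply_sub_mem_pow (hℓ' : I.map ℓ' ≤ I) (hinv : ∀ a, ℓ (ℓ' a) = a)
    (hφ : ∀ {r a}, a ∈ I ^ r → φ a - ℓ a ∈ I ^ (r + 1)) (N : ℕ) (b : A) :
    ∃ a, φ a - b ∈ I ^ N := by
  induction N with
  | zero => exact ⟨0, by simp⟩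
  | succ N ih =>
    obtain ⟨a, ha⟩ := ih
    -- `φ` reproduces the correction `c` up to an error of one order higher.
    set c := ℓ' (φ a - b)
    have hc : φ c - (φ a - b) ∈ I ^ (N + 1) := by
      simpa [c, hinv] using hφ (apply_mem_pow_of_map_le hℓ' ha)
    refine ⟨a - c, ?_⟩
    rw [map_sub, show φ a - φ c - b = -(φ c - (φ a - b)) by ring]
    exact neg_mem hc

theorem mem_pow_of_apply_mem_pow (hℓ' : I.map ℓ' ≤ I) (hinv : ∀ a, ℓ' (ℓ a) = a)
    (hφ : ∀ {r a}, a ∈ I ^ r → φ a - ℓ a ∈ I ^ (r + 1)) {N : ℕ} {a : A} (h : φ a ∈ I ^ N) :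
    a ∈ I ^ N := by
  induction N with
  | zero => simp
  | succ N ih =>
    have hℓa : ℓ a ∈ I ^ (N + 1) := by
      simpa using sub_mem h (hφ (ih (pow_le_pow_right N.le_succ h)))
    simpa [hinv] using apply_mem_pow_of_map_le hℓ' hℓa

end

theorem nonempty_algEquiv_quotient_sup_map {R : Type*} [CommSemiring R] [Algebra R A]
    {φ : A →ₐ[R] A} {K : Ideal A} (hK : K ≤ K.comap φ) (hsurj : ∀ b, ∃ a, φ a - b ∈ K)
    (hinj : ∀ a, φ a ∈ K → a ∈ K) (J : Ideal A) :
    Nonempty ((A ⧸ J ⊔ K) ≃ₐ[R] (A ⧸ J.map φ ⊔ K)) := by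
  have hbij : Function.Bijective (quotientMapₐ K φ hK) := by
    refine ⟨(injective_iff_map_eq_zero _).mpr fun x hx => ?_, fun y => ?_⟩
    · obtain ⟨a, rfl⟩ := Quotient.mk_surjective x
      rw [quotient_map_mkₐ, Quotient.mkₐ_eq_mk, Quotient.eq_zero_iff_mem] at hx
      exact Quotient.eq_zero_iff_mem.mpr (hinj a hx)
    · obtain ⟨b, rfl⟩ := Quotient.mk_surjective y
      obtain ⟨a, ha⟩ := hsurj b
      exact ⟨Quotient.mk K a, by simpa [Quotient.eq] using ha⟩
  let e := AlgEquiv.ofBijective _ hbij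
  have hmap : (J.map (Quotient.mkₐ R K)).map (e : A ⧸ K →+* A ⧸ K)
      = (J.map φ).map (Quotient.mkₐ R K) := by
    change map (e : A ⧸ K →+* A ⧸ K) (map (Quotient.mkₐ R K : A →+* A ⧸ K) J)
      = map (Quotient.mkₐ R K : A →+* A ⧸ K) (map (φ : A →+* A) J)
    rw [map_map, map_map]
    exact congrArg (map · J) (congrArg AlgHom.toRingHom (quotient_map_comp_mkₐ K φ hK))
  exact ⟨(quotientEquivAlgOfEq R (sup_comm _ _)).trans <|
    (DoubleQuot.quotQuotEquivQuotSupₐ R K J).symm.trans <|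
    (quotientEquivAlg _ _ e hmap.symm).trans <|
    (DoubleQuot.quotQuotEquivQuotSupₐ R K (J.map φ)).trans
      (quotientEquivAlgOfEq R (sup_comm _ _))⟩

end Ideal

theorem Finsupp.exists_eq_single_of_degree_eq_one {σ : Type*} {x : σ →₀ ℕ}
    (h : x.degree = 1) : ∃ j, x = Finsupp.single j 1 := by
  classical
  obtain ⟨j, hj⟩ : ∃ j, x j ≠ 0 := by
    by_contra! h0
    simp [show x = 0 from Finsupp.ext h0] at h
  have hsplit := Finsupp.single_add_erase j x
  have hdeg : x j + (x.erase j).degree = 1 := by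
    rw [← h, ← Finsupp.degree_single j (x j), ← map_add, hsplit]
  have hxj : x j = 1 := by omega
  have herase : x.erase j = 0 := (Finsupp.degree_eq_zero_iff _).mp (by omega)
  exact ⟨j, by rw [← hsplit, herase, add_zero, hxj]⟩

namespace MvPolynomial

variable {R σ τ : Type*} [CommRing R]

theorem mem_idealOfVars_iff_constantCoeff_eq_zero {p : MvPolynomial σ R} :
    p ∈ idealOfVars σ R ↔ constantCoeff p = 0 := by
  simpa [constantCoeff_eq, Finsupp.degree_eq_zero_iff] using mem_pow_idealOfVars_iff' 1 p

theorem map_idealOfVars_le {S F : Type*} [CommRing S] [FunLike F (MvPolynomial σ R) S]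
    [RingHomClass F (MvPolynomial σ R) S] {f : F} {J : Ideal S} (h : ∀ i, f (X i) ∈ J) :
    (idealOfVars σ R).map f ≤ J := by
  rw [Ideal.map_span, Ideal.span_le]
  rintro _ ⟨_, ⟨i, rfl⟩, rfl⟩
  exact h i

theorem map_aeval_idealOfVars {S : Type*} [CommRing S] [Algebra R S] (g : σ → S) :
    (idealOfVars σ R).map (aeval g) = Ideal.span (Set.range g) := by
  rw [Ideal.map_span, ← Set.range_comp]
  congr 2
  ext i
  simp

theorem map_aeval_idealOfVars_le {g : σ → MvPolynomial τ R}
    (hg : ∀ i, constantCoeff (g i) = 0) : (idealOfVars σ R).map (aeval g) ≤ idealOfVars τ R :=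
  map_idealOfVars_le fun i => by
    rw [aeval_X, mem_idealOfVars_iff_constantCoeff_eq_zero]
    exact hg i

theorem aeval_sub_aeval_mem {S : Type*} [CommRing S] [Algebra R S] {g g' : σ → S}
    {J : Ideal S} (h : ∀ i, g i - g' i ∈ J) (p : MvPolynomial σ R) :
    aeval g p - aeval g' p ∈ J := by
  rw [← Ideal.Quotient.eq]
  change (Ideal.Quotient.mkₐ R J).comp (aeval g) p
    = (Ideal.Quotient.mkₐ R J).comp (aeval g') p
  congr 1
  ext i
  simpa [Ideal.Quotient.eq] using h i

noncomputable def linearSubst [Fintype τ] (M : Matrix σ τ R) : σ → MvPolynomial τ R :=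
  fun i => ∑ j, M i j • X j

theorem linearSubst_mem_idealOfVars [Fintype τ] (M : Matrix σ τ R) (i : σ) :
    linearSubst M i ∈ idealOfVars τ R :=
  Ideal.sum_mem _ fun j _ => Submodule.smul_of_tower_mem _ _ (Ideal.subset_span ⟨j, rfl⟩)

theorem aeval_linearSubst {υ : Type*} [Fintype τ] [Fintype υ] (M : Matrix τ υ R)
    (N : Matrix σ τ R) (i : σ) :
    aeval (linearSubst M) (linearSubst N i) = linearSubst (N * M) i := by
  simp only [linearSubst, map_sum, map_smul, aeval_X, Finset.smul_sum, smul_smul,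
    Matrix.mul_apply, Finset.sum_smul]
  exact Finset.sum_comm

theorem linearSubst_one [Fintype σ] [DecidableEq σ] :
    linearSubst (1 : Matrix σ σ R) = X := by
  ext1 i
  simp [linearSubst, Matrix.one_apply]

theorem aeval_linearSubst_aeval_linearSubst [Fintype σ] [DecidableEq σ] {M N : Matrix σ σ R}
    (h : N * M = 1) (p : MvPolynomial σ R) :
    aeval (linearSubst M) (aeval (linearSubst N) p) = p := by
  rw [comp_aeval_apply]
  simp_rw [aeval_linearSubst, h, linearSubst_one, aeval_X_left_apply]

theorem map_aeval_linearSubst_idealOfVars_le [Fintype τ] (M : Matrix σ τ R) :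
    (idealOfVars σ R).map (aeval (linearSubst M)) ≤ idealOfVars τ R :=
  map_idealOfVars_le fun i => by
    rw [aeval_X]
    exact linearSubst_mem_idealOfVars M i

end MvPolynomial

section Jets

variable {n k : ℕ}

theorem sub_linearSubst_linearPart_mem_sq {Δ : Fin k → MvPolynomial (Fin n) ℂ}
    (h0 : ∀ i, constantCoeff (Δ i) = 0) (i : Fin k) :
    Δ i - linearSubst (linearPart Δ) i ∈ idealOfVars (Fin n) ℂ ^ 2 := by
  rw [mem_pow_idealOfVars_iff']
  intro x hx
  rcases (show x.degree = 0 ∨ x.degree = 1 by omega) with hx0 | hx1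
  · rw [(Finsupp.degree_eq_zero_iff x).mp hx0, coeff_sub, ← constantCoeff_eq, h0 i]
    simp [linearSubst]
  · obtain ⟨l, rfl⟩ := Finsupp.exists_eq_single_of_degree_eq_one hx1
    simp [linearSubst, linearPart, coeff_sum, coeff_X, Finsupp.single_left_inj]

section InvertibleLinearPart

variable {Δ : Fin n → MvPolynomial (Fin n) ℂ} (h0 : ∀ i, constantCoeff (Δ i) = 0)
  (hlin : IsUnit (linearPart Δ))
include h0

theorem aeval_sub_aeval_linearSubst_mem_pow_succ {r : ℕ} {p : MvPolynomial (Fin n) ℂ}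
    (hp : p ∈ idealOfVars (Fin n) ℂ ^ r) :
    aeval Δ p - aeval (linearSubst (linearPart Δ)) p ∈ idealOfVars (Fin n) ℂ ^ (r + 1) :=
  Ideal.sub_mem_pow_succ_of_mem_pow (map_aeval_idealOfVars_le h0)
    (map_aeval_linearSubst_idealOfVars_le _)
    (aeval_sub_aeval_mem (sub_linearSubst_linearPart_mem_sq h0)) hp

include hlin

theorem nonempty_algEquiv_quotient_span_aeval {ι : Type*} (Ψ : ι → MvPolynomial (Fin n) ℂ)
    (N : ℕ) :
    Nonempty ((MvPolynomial (Fin n) ℂ ⧸ Ideal.span (Set.range Ψ) ⊔ idealOfVars (Fin n) ℂ ^ N)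
      ≃ₐ[ℂ] (MvPolynomial (Fin n) ℂ ⧸
        Ideal.span (Set.range fun i => aeval Δ (Ψ i)) ⊔ idealOfVars (Fin n) ℂ ^ N)) := by
  have hdet := (Matrix.isUnit_iff_isUnit_det _).mp hlin
  have hℓ' := map_aeval_linearSubst_idealOfVars_le (R := ℂ) (linearPart Δ)⁻¹
  have hK : idealOfVars (Fin n) ℂ ^ N ≤ (idealOfVars (Fin n) ℂ ^ N).comap (aeval Δ) :=
    Ideal.map_le_iff_le_comap.mp <| (Ideal.map_pow _ _ _).trans_le <|
      Ideal.pow_right_mono (map_aeval_idealOfVars_le h0) N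
  have hspan : Ideal.span (Set.range fun i => aeval Δ (Ψ i))
      = (Ideal.span (Set.range Ψ)).map (aeval Δ) := by
    rw [Ideal.map_span, ← Set.range_comp]
    rfl
  rw [hspan]
  exact Ideal.nonempty_algEquiv_quotient_sup_map hK
    (Ideal.exists_apply_sub_mem_pow hℓ'
      (aeval_linearSubst_aeval_linearSubst (Matrix.nonsing_inv_mul _ hdet))
      (aeval_sub_aeval_linearSubst_mem_pow_succ h0) N)
    (fun _ => Ideal.mem_pow_of_apply_mem_pow hℓ'
      (aeval_linearSubst_aeval_linearSubst (Matrix.mul_nonsing_inv _ hdet))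
      (aeval_sub_aeval_linearSubst_mem_pow_succ h0)) _

theorem idealOfVars_le_span_sup_sq :
    idealOfVars (Fin n) ℂ ≤ Ideal.span (Set.range Δ) ⊔ idealOfVars (Fin n) ℂ ^ 2 := by
  intro p hp
  have hdet := (Matrix.isUnit_iff_isUnit_det _).mp hlin
  set q := aeval (linearSubst (linearPart Δ)⁻¹) p
  have hq : q ∈ idealOfVars (Fin n) ℂ :=
    map_aeval_linearSubst_idealOfVars_le _ (Ideal.mem_map_of_mem _ hp)
  have hspan : aeval Δ q ∈ Ideal.span (Set.range Δ) :=
    map_aeval_idealOfVars (R := ℂ) Δ ▸ Ideal.mem_map_of_mem _ hq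
  have hsq := aeval_sub_aeval_linearSubst_mem_pow_succ h0 (r := 1) (by simpa using hq)
  rw [aeval_linearSubst_aeval_linearSubst (Matrix.nonsing_inv_mul _ hdet)] at hsq
  rw [show p = aeval Δ q - (aeval Δ q - p) by ring]
  exact sub_mem (Ideal.mem_sup_left hspan) (Ideal.mem_sup_right hsq)

end InvertibleLinearPart

theorem span_range_aeval_sup_pow_eq {Φ : Fin k → MvPolynomial (Fin n) ℂ}
    (hΦ : ∀ i, constantCoeff (Φ i) = 0) {Δ' : Fin k → MvPolynomial (Fin k) ℂ}
    (h0 : ∀ j, constantCoeff (Δ' j) = 0) (hlin : IsUnit (linearPart Δ')) (N : ℕ) :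
    Ideal.span (Set.range fun j => aeval Φ (Δ' j)) ⊔ idealOfVars (Fin n) ℂ ^ (N + 1)
      = Ideal.span (Set.range Φ) ⊔ idealOfVars (Fin n) ℂ ^ (N + 1) := by
  have hle : Ideal.span (Set.range Δ') ≤ idealOfVars (Fin k) ℂ :=
    Ideal.span_le.mpr (Set.range_subset_iff.mpr fun j =>
      mem_idealOfVars_iff_constantCoeff_eq_zero.mpr (h0 j))
  have key := Ideal.map_sup_pow_eq_of_le_sup_pow (θ := aeval Φ) hle
    (Ideal.le_sup_pow_of_le_sup_sq (idealOfVars_le_span_sup_sq h0 hlin) N)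
    (map_aeval_idealOfVars_le hΦ)
  rwa [Ideal.map_span, ← Set.range_comp, map_aeval_idealOfVars] at key

end Jets

/-- The local algebra `A_Ψ` is invariant under the left-right action of
`Diff_d^n × Diff_d^k`: if `Ψ''` is obtained from `Ψ` by reparametrizing the source by
`Δ ∈ Diff_d^n` and the target by `Δ' ∈ Diff_d^k`, then the quotient rings
`MvPolynomial (Fin n) ℂ / (I⟨Ψ⟩ ⊔ m_n^(d+1))` and
`MvPolynomial (Fin n) ℂ / (I⟨Ψ''⟩ ⊔ m_n^(d+1))` are isomorphic `ℂ`-algebras.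
In particular each contact singularity `Θ_A` is a left-right invariant subset of
`J_d^{n,k}`. -/
theorem local_algebra_left_right_invariant (d n k : ℕ)
    (Ψ : Fin k → MvPolynomial (Fin n) ℂ)
    (hΨ0 : ∀ i, constantCoeff (Ψ i) = 0)
    (Δ : Fin n → MvPolynomial (Fin n) ℂ)
    (hΔ0 : ∀ i, constantCoeff (Δ i) = 0)
    (hΔlin : IsUnit (linearPart Δ))
    (Δ' : Fin k → MvPolynomial (Fin k) ℂ)
    (hΔ'0 : ∀ j, constantCoeff (Δ' j) = 0)
    (hΔ'lin : IsUnit (linearPart Δ'))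
    (Ψ'' : Fin k → MvPolynomial (Fin n) ℂ)
    (hΨ'' : Ψ'' = fun j => aeval (fun i => aeval Δ (Ψ i)) (Δ' j)) :
    Nonempty
      ((MvPolynomial (Fin n) ℂ ⧸ (Ideal.span (Set.range Ψ) ⊔ varIdeal n ^ (d + 1)))
        ≃ₐ[ℂ]
       (MvPolynomial (Fin n) ℂ ⧸ (Ideal.span (Set.range Ψ'') ⊔ varIdeal n ^ (d + 1)))) := by
  subst hΨ''
  have hΦ : ∀ i, constantCoeff (aeval Δ (Ψ i)) = 0 := fun i =>
    mem_idealOfVars_iff_constantCoeff_eq_zero.mp <| map_aeval_idealOfVars_le hΔ0 <|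
      Ideal.mem_map_of_mem _ (mem_idealOfVars_iff_constantCoeff_eq_zero.mpr (hΨ0 i))
  obtain ⟨e⟩ := nonempty_algEquiv_quotient_span_aeval hΔ0 hΔlin Ψ (d + 1)
  have htarget := span_range_aeval_sup_pow_eq hΦ hΔ'0 hΔ'lin d
  exact ⟨e.trans (Ideal.quotientEquivAlgOfEq ℂ htarget.symm)⟩
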